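/- Let c ∈ [0, 1], let θ = 2·arcsin(√c), let β ∈ ℝ, and let M(c) be the complex 2×2 matrix !![2c−1, −2·√(c·(1−c)); −2·√(c·(1−c)), 1−2c]. Then exp(−(i·β) • M(c)) = R_Y(θ) · R_Z(−2β) · R_Y(−θ). -/

import Mathlib

open Matrix

/-- The single-qubit rotation `R_Y(θ)`. -/
noncomputable def RY (θ : ℝ) : Matrix (Fin 2) (Fin 2) ℂ :=
  !![((Real.cos (θ / 2) : ℝ) : ℂ), ((-Real.sin (θ / 2) : ℝ) : ℂ);
     ((Real.sin (θ / 2) : ℝ) : ℂ), ((Real.cos (θ / 2) : ℝ) : ℂ)]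

/-- The single-qubit rotation `R_Z(φ)`. -/
noncomputable def RZ (φ : ℝ) : Matrix (Fin 2) (Fin 2) ℂ :=
  !![Complex.exp (-(Complex.I * φ / 2)), 0; 0, Complex.exp (Complex.I * φ / 2)]

/-!
With `θ = 2 arcsin √c` one has `sin (θ/2) = √c` and `cos (θ/2) = √(1 - c)`, and the double-angle
formulas show `M(c) = -R_Y(θ) Z R_Y(θ)⁻¹` for the Pauli matrix `Z`. The exponential of a conjugate
is the conjugate of the exponential, and `exp (iβ Z) = R_Z(-2β)`.
-/

open Real

def pauliZ : Matrix (Fin 2) (Fin 2) ℂ := diagonal ![1, -1]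

noncomputable def wsMixer (c : ℝ) : Matrix (Fin 2) (Fin 2) ℂ :=
  !![((2 * c - 1 : ℝ) : ℂ), ((-2 * √(c * (1 - c)) : ℝ) : ℂ);
     ((-2 * √(c * (1 - c)) : ℝ) : ℂ), ((1 - 2 * c : ℝ) : ℂ)]

theorem RY_mul_RY (a b : ℝ) : RY a * RY b = RY (a + b) := by
  simp only [RY, mul_fin_two, add_div, cos_add, sin_add]
  ext i j; fin_cases i <;> fin_cases j <;> simp <;> ring

theorem RY_zero : RY 0 = 1 := by
  ext i j; fin_cases i <;> fin_cases j <;> simp [RY]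

theorem RY_mul_RY_neg (θ : ℝ) : RY θ * RY (-θ) = 1 := by
  rw [RY_mul_RY, add_neg_cancel, RY_zero]

theorem isUnit_RY (θ : ℝ) : IsUnit (RY θ) :=
  ⟨⟨RY θ, RY (-θ), RY_mul_RY_neg θ, by simpa using RY_mul_RY_neg (-θ)⟩, rfl⟩

theorem inv_RY (θ : ℝ) : (RY θ)⁻¹ = RY (-θ) := inv_eq_right_inv (RY_mul_RY_neg θ)

theorem RY_mul_pauliZ_mul_RY_neg (θ : ℝ) :
    RY θ * pauliZ * RY (-θ) = !![(cos θ : ℂ), sin θ; sin θ, -cos θ] := by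
  obtain ⟨φ, rfl⟩ : ∃ φ, θ = 2 * φ := ⟨θ / 2, by ring⟩
  simp only [RY, pauliZ, diagonal_vec2, mul_fin_two, neg_div, mul_div_cancel_left₀ φ two_ne_zero,
    cos_neg, sin_neg, cos_two_mul', sin_two_mul]
  ext i j; fin_cases i <;> fin_cases j <;> simp <;> ring

theorem wsMixer_eq_neg_RY_conj_pauliZ {c : ℝ} (hc : c ∈ Set.Icc 0 1) :
    wsMixer c = -(RY (2 * arcsin √c) * pauliZ * RY (-(2 * arcsin √c))) := by
  obtain ⟨hc0, hc1⟩ := hc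
  have hsin : sin (arcsin √c) = √c := sin_arcsin (by linarith [sqrt_nonneg c]) (sqrt_le_one.mpr hc1)
  have hcos : cos (arcsin √c) = √(1 - c) := by rw [cos_arcsin, sq_sqrt hc0]
  rw [RY_mul_pauliZ_mul_RY_neg, cos_two_mul', sin_two_mul, hsin, hcos, sq_sqrt hc0,
    sq_sqrt (by linarith)]
  ext i j; fin_cases i <;> fin_cases j <;> simp [wsMixer, sqrt_mul hc0] <;> ring

theorem exp_smul_pauliZ (z : ℂ) :
    NormedSpace.exp (z • pauliZ) = diagonal ![Complex.exp z, Complex.exp (-z)] := by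
  rw [pauliZ, ← diagonal_smul, exp_diagonal]
  congr 1; ext i; fin_cases i <;> simp [← Complex.exp_eq_exp_ℂ]

theorem exp_smul_pauliZ_eq_RZ (φ : ℝ) :
    NormedSpace.exp ((-(Complex.I * φ / 2)) • pauliZ) = RZ φ := by
  rw [exp_smul_pauliZ, neg_neg]
  ext i j; fin_cases i <;> fin_cases j <;> simp [RZ]

theorem ws_mixer_exp_rotation_decomposition (c : ℝ) (hc : c ∈ Set.Icc (0 : ℝ) 1)
    (θ : ℝ) (hθ : θ = 2 * Real.arcsin (Real.sqrt c)) (β : ℝ)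
    (M : Matrix (Fin 2) (Fin 2) ℂ)
    (hM : M = !![((2 * c - 1 : ℝ) : ℂ), ((-2 * Real.sqrt (c * (1 - c)) : ℝ) : ℂ);
                 ((-2 * Real.sqrt (c * (1 - c)) : ℝ) : ℂ), ((1 - 2 * c : ℝ) : ℂ)]) :
    NormedSpace.exp ((-(Complex.I * β)) • M) = RY θ * RZ (-2 * β) * RY (-θ) := by
  have hconj : (-(Complex.I * β)) • M =
      RY θ * ((-(Complex.I * ((-2 * β : ℝ) : ℂ) / 2)) • pauliZ) * (RY θ)⁻¹ := by
    rw [hM, ← wsMixer, wsMixer_eq_neg_RY_conj_pauliZ hc, ← hθ, inv_RY, smul_neg, ← neg_smul,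
      mul_smul_comm, smul_mul_assoc]
    push_cast; ring_nf
  rw [hconj, exp_conj _ _ (isUnit_RY θ), exp_smul_pauliZ_eq_RZ, inv_RY]
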